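/- A system C = (1, c₂, c₃) with 1 < c₂ < c₃ is canonical if and only if r = 0 or c₂ - q ≤ r, where c₃ = q·c₂ + r with 0 ≤ r < c₂. -/

import Mathlib

/-!
Write `a = c 2`, `b = c 3` and `f = twoCoinGrd a`, so that `f w = w / a + w % a` is the number of
coins greedy uses to pay `w` with the coins `1` and `a` alone, which is optimal for them. Greedy
pays `v` with `v / b` coins `b` and then `f (v % b)` coins; a representation with `k` coins `b` uses
at least `k + f (v - k * b)`. Hence greedy is optimal as soon as `f u + 1 ≤ f (u + b)` for all `u`.
Writing `u = m * a + t`, adding `b = q * a + r` raises `f` by `q + r ≥ 1`, or by `q + r + 1 - a`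
when `a ≤ t + r`; the latter case needs `r ≠ 0`, and then the increase is positive as `a - q ≤ r`.
Conversely, if `r ≠ 0` and `q + r < a`, greedy pays `(q + 1) * a` with `1 + (a - r)` coins instead
of `q + 1`.
-/

open Finset

/-- `x` is a representation of value `v` in the coin system `c 1, …, c n`. -/
def IsRepr (n : ℕ) (c : ℕ → ℕ) (v : ℕ) (x : ℕ → ℕ) : Prop :=
  ∑ i ∈ Finset.Icc 1 n, c i * x i = v

/-- Minimum number of coins over all representations of `v`. -/
noncomputable def opt (n : ℕ) (c : ℕ → ℕ) (v : ℕ) : ℕ :=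
  sInf {k | ∃ x : ℕ → ℕ, IsRepr n c v x ∧ ∑ i ∈ Finset.Icc 1 n, x i = k}

/-- Number of coins used by the greedy algorithm to pay `v`. -/
def grd (n : ℕ) (c : ℕ → ℕ) (v : ℕ) : ℕ :=
  if hv : v = 0 then 0
  else
    let m := ((Finset.Icc 1 n).filter (fun i => c i ≤ v)).sup c
    if hm : 0 < m then grd n c (v - m) + 1 else 0
termination_by v
decreasing_by omega

/-- The system is canonical: greedy is optimal for every positive value. -/
def Canonical (n : ℕ) (c : ℕ → ℕ) : Prop :=
  ∀ v, 0 < v → opt n c v = grd n c v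

/-- `w` is a counterexample to the system. -/
def IsCex (n : ℕ) (c : ℕ → ℕ) (w : ℕ) : Prop :=
  0 < w ∧ opt n c w < grd n c w

/-- `w` is the minimum counterexample to the system. -/
def MinCex (n : ℕ) (c : ℕ → ℕ) (w : ℕ) : Prop :=
  IsCex n c w ∧ ∀ u, IsCex n c u → w ≤ u

/-- A (currency) system: first coin is `1` and coins strictly increase. -/
def IsSystem (n : ℕ) (c : ℕ → ℕ) : Prop :=
  c 1 = 1 ∧ StrictMonoOn c (Set.Icc 1 n)

section General

variable {n : ℕ} {c : ℕ → ℕ}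

lemma grd_zero : grd n c 0 = 0 := by
  rw [grd]; simp

lemma grd_eq_grd_sub_add_one {v i : ℕ} (hi : i ∈ Icc 1 n) (hiv : c i ≤ v) (hci : 0 < c i)
    (hmax : ∀ j ∈ Icc 1 n, c j ≤ v → c j ≤ c i) :
    grd n c v = grd n c (v - c i) + 1 := by
  have hsup : ((Icc 1 n).filter (fun j => c j ≤ v)).sup c = c i :=
    le_antisymm (Finset.sup_le fun j hj => hmax j (mem_filter.1 hj).1 (mem_filter.1 hj).2)
      (le_sup (mem_filter.2 ⟨hi, hiv⟩))
  rw [grd, dif_neg (by omega)]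
  simp only [hsup, dif_pos hci]

lemma grd_add_mul {v k i : ℕ} (hi : i ∈ Icc 1 n) (hci : 0 < c i)
    (hmax : ∀ j ∈ Icc 1 n, c j ≤ v + k * c i → c j ≤ c i) :
    grd n c (v + k * c i) = grd n c v + k := by
  induction k with
  | zero => simp
  | succ k ih =>
    have hmax' : ∀ j ∈ Icc 1 n, c j ≤ v + k * c i → c j ≤ c i := fun j hj hjv =>
      hmax j hj (by rw [add_one_mul]; omega)
    rw [grd_eq_grd_sub_add_one hi (by rw [add_one_mul]; omega) hci hmax, add_one_mul,
      ← add_assoc, Nat.add_sub_cancel, ih hmax', add_assoc]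

lemma exists_isRepr_grd (hn : 1 ≤ n) (h1 : c 1 = 1) (v : ℕ) :
    ∃ x : ℕ → ℕ, IsRepr n c v x ∧ ∑ i ∈ Icc 1 n, x i = grd n c v := by
  induction v using Nat.strong_induction_on with
  | _ v ih =>
    rcases Nat.eq_zero_or_pos v with rfl | hv
    · exact ⟨0, by simp [IsRepr], by simp [grd_zero]⟩
    set s := (Icc 1 n).filter (fun j => c j ≤ v)
    have h1s : 1 ∈ s := mem_filter.2 ⟨mem_Icc.2 ⟨le_rfl, hn⟩, by omega⟩
    obtain ⟨i, his, hsup⟩ := exists_mem_eq_sup s ⟨1, h1s⟩ c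
    obtain ⟨hi, hiv⟩ := mem_filter.1 his
    have hci : 0 < c i := by
      have := le_sup (f := c) h1s
      omega
    have hmax : ∀ j ∈ Icc 1 n, c j ≤ v → c j ≤ c i := fun j hj hjv =>
      hsup ▸ le_sup (mem_filter.2 ⟨hj, hjv⟩)
    obtain ⟨x, hx, hsum⟩ := ih (v - c i) (by omega)
    refine ⟨x + Pi.single i 1, ?_, ?_⟩
    · simp only [IsRepr, Pi.add_apply, mul_add, sum_add_distrib, Pi.single_apply, mul_ite,
        mul_one, mul_zero, sum_ite_eq', if_pos hi] at hx ⊢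
      omega
    · simp only [Pi.add_apply, sum_add_distrib, Pi.single_apply, sum_ite_eq', if_pos hi]
      rw [hsum, grd_eq_grd_sub_add_one hi hiv hci hmax]

lemma opt_le_of_isRepr {v : ℕ} {x : ℕ → ℕ} (hx : IsRepr n c v x) :
    opt n c v ≤ ∑ i ∈ Icc 1 n, x i :=
  Nat.sInf_le ⟨x, hx, rfl⟩

lemma canonical_iff_grd_le (hn : 1 ≤ n) (h1 : c 1 = 1) :
    Canonical n c ↔ ∀ v x, IsRepr n c v x → grd n c v ≤ ∑ i ∈ Icc 1 n, x i := by
  constructor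
  · intro hcan v x hx
    rcases Nat.eq_zero_or_pos v with rfl | hv
    · simp [grd_zero]
    · exact hcan v hv ▸ opt_le_of_isRepr hx
  · intro hgrd v _
    obtain ⟨x, hx, hsum⟩ := exists_isRepr_grd hn h1 v
    refine le_antisymm (hsum ▸ opt_le_of_isRepr hx) (le_csInf ⟨_, x, hx, rfl⟩ ?_)
    rintro k ⟨y, hy, rfl⟩
    exact hgrd v y hy

end General

def twoCoinGrd (a w : ℕ) : ℕ := w / a + w % a

section TwoCoins

variable {a : ℕ}

lemma twoCoinGrd_add_mul_of_lt {s : ℕ} (hs : s < a) (k : ℕ) :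
    twoCoinGrd a (s + k * a) = k + s := by
  have ha : 0 < a := by omega
  rw [twoCoinGrd, Nat.add_mul_div_right _ _ ha, Nat.div_eq_of_lt hs, Nat.add_mul_mod_self_right,
    Nat.mod_eq_of_lt hs]
  omega

lemma twoCoinGrd_add_mul_le_add (x₁ x₂ : ℕ) :
    twoCoinGrd a (x₁ + x₂ * a) ≤ x₁ + x₂ := by
  rcases Nat.eq_zero_or_pos a with rfl | ha
  · simp [twoCoinGrd]
  rw [← Nat.mod_add_div' x₁ a, add_assoc, ← add_mul,
    twoCoinGrd_add_mul_of_lt (Nat.mod_lt _ ha)]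
  have : x₁ / a ≤ x₁ / a * a := Nat.le_mul_of_pos_right _ ha
  omega

variable {b q r : ℕ}

lemma add_one_le_twoCoinGrd_add (hb : b = q * a + r) (hr : r < a) (hq : 0 < q)
    (hcond : r = 0 ∨ a - q ≤ r) (u : ℕ) : twoCoinGrd a u + 1 ≤ twoCoinGrd a (u + b) := by
  have ha : 0 < a := by omega
  have ht := Nat.mod_lt u ha
  rw [← Nat.mod_add_div' u a, twoCoinGrd_add_mul_of_lt ht]
  set t := u % a
  set m := u / a
  by_cases htr : t + r < a
  · have : t + m * a + b = (t + r) + (m + q) * a := by rw [hb]; ring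
    rw [this, twoCoinGrd_add_mul_of_lt htr]
    omega
  · have : t + m * a + b = (t + r - a) + (m + q + 1) * a := by rw [hb]; ring_nf; omega
    rw [this, twoCoinGrd_add_mul_of_lt (by omega)]
    omega

lemma add_le_twoCoinGrd_add_mul (hb : b = q * a + r) (hr : r < a) (hq : 0 < q)
    (hcond : r = 0 ∨ a - q ≤ r) (u k : ℕ) :
    twoCoinGrd a u + k ≤ twoCoinGrd a (u + k * b) := by
  induction k with
  | zero => simp
  | succ k ih =>
    have := add_one_le_twoCoinGrd_add hb hr hq hcond (u + k * b)
    rw [add_one_mul, ← add_assoc u]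
    omega

end TwoCoins

lemma sum_Icc_one_three (f : ℕ → ℕ) : ∑ i ∈ Icc 1 3, f i = f 1 + f 2 + f 3 := by
  rw [sum_Icc_succ_top (by omega), sum_Icc_succ_top (by omega), Icc_self, sum_singleton]

section ThreeCoins

variable {c : ℕ → ℕ}

lemma grd_three_add_mul (h1 : c 1 = 1) (h3 : c 2 < c 3) (v k : ℕ) :
    grd 3 c (v + k * c 3) = grd 3 c v + k := by
  refine grd_add_mul (by simp) (by omega) fun j hj _ => ?_
  obtain rfl | rfl | rfl : j = 1 ∨ j = 2 ∨ j = 3 := by simp at hj; omega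
  all_goals omega

lemma grd_three_eq_self_of_lt (h1 : c 1 = 1) (h3 : c 2 < c 3) {v : ℕ} (hv : v < c 2) :
    grd 3 c v = v := by
  have := grd_add_mul (n := 3) (c := c) (v := 0) (k := v) (i := 1) (by simp) (by omega)
    fun j hj hjv => by
      rw [h1, mul_one, zero_add] at hjv
      obtain rfl | rfl | rfl : j = 1 ∨ j = 2 ∨ j = 3 := by simp at hj; omega
      all_goals omega
  rwa [h1, mul_one, zero_add, grd_zero, zero_add] at this

lemma grd_three_eq_twoCoinGrd_of_lt (h1 : c 1 = 1) (h2 : 1 < c 2) (h3 : c 2 < c 3) {v : ℕ}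
    (hv : v < c 3) :
    grd 3 c v = twoCoinGrd (c 2) v := by
  have hs := Nat.mod_lt v (by omega : 0 < c 2)
  have hdecomp := Nat.mod_add_div' v (c 2)
  rw [← Nat.mod_add_div' v (c 2), twoCoinGrd_add_mul_of_lt hs,
    grd_add_mul (by simp) (by omega) fun j hj hjv => ?_, grd_three_eq_self_of_lt h1 h3 hs, add_comm]
  obtain rfl | rfl | rfl : j = 1 ∨ j = 2 ∨ j = 3 := by simp at hj; omega
  all_goals omega

variable {q r : ℕ}

lemma grd_three_le_twoCoinGrd (h1 : c 1 = 1) (h2 : 1 < c 2) (h3 : c 2 < c 3)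
    (hqr : c 3 = q * c 2 + r) (hr : r < c 2) (hcond : r = 0 ∨ c 2 - q ≤ r) (w : ℕ) :
    grd 3 c w ≤ twoCoinGrd (c 2) w := by
  have hq : 0 < q := Nat.pos_of_ne_zero (by rintro rfl; omega)
  rw [← Nat.mod_add_div' w (c 3), grd_three_add_mul h1 h3,
    grd_three_eq_twoCoinGrd_of_lt h1 h2 h3 (Nat.mod_lt _ (by omega))]
  exact add_le_twoCoinGrd_add_mul hqr hr hq hcond _ _

lemma grd_three_le_of_isRepr (h1 : c 1 = 1) (h2 : 1 < c 2) (h3 : c 2 < c 3)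
    (hqr : c 3 = q * c 2 + r) (hr : r < c 2) (hcond : r = 0 ∨ c 2 - q ≤ r)
    {v : ℕ} {x : ℕ → ℕ} (hx : IsRepr 3 c v x) : grd 3 c v ≤ ∑ i ∈ Icc 1 3, x i := by
  rw [IsRepr, sum_Icc_one_three, h1, one_mul] at hx
  rw [sum_Icc_one_three, ← hx, mul_comm (c 2), mul_comm (c 3), grd_three_add_mul h1 h3]
  have hgrd := grd_three_le_twoCoinGrd h1 h2 h3 hqr hr hcond (x 1 + x 2 * c 2)
  have htwo := twoCoinGrd_add_mul_le_add (a := c 2) (x 1) (x 2)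
  omega

lemma grd_three_succ_mul_eq (h1 : c 1 = 1) (h3 : c 2 < c 3)
    (hqr : c 3 = q * c 2 + r) (hr : r < c 2) (hr0 : r ≠ 0) :
    grd 3 c ((q + 1) * c 2) = c 2 - r + 1 := by
  have hsplit : (q + 1) * c 2 = (c 2 - r) + 1 * c 3 := by rw [hqr, add_one_mul]; omega
  rw [hsplit, grd_three_add_mul h1 h3, grd_three_eq_self_of_lt h1 h3 (by omega)]

end ThreeCoins

theorem three_coins_canonical_iff (c : ℕ → ℕ) (h1 : c 1 = 1) (h2 : 1 < c 2)
    (h3 : c 2 < c 3) (q r : ℕ) (hqr : c 3 = q * c 2 + r) (hr : r < c 2) :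
    Canonical 3 c ↔ (r = 0 ∨ c 2 - q ≤ r) := by
  rw [canonical_iff_grd_le (by norm_num) h1]
  refine ⟨fun hgrd => ?_, fun hcond v x hx => grd_three_le_of_isRepr h1 h2 h3 hqr hr hcond hx⟩
  by_contra! hcon
  have hx : IsRepr 3 c ((q + 1) * c 2) (Pi.single 2 (q + 1)) := by
    simp [IsRepr, sum_Icc_one_three, mul_comm]
  have hcex := hgrd _ _ hx
  rw [grd_three_succ_mul_eq h1 h3 hqr hr hcon.1, sum_Icc_one_three] at hcex
  simp only [Pi.single_eq_same, Pi.single_eq_of_ne (by decide : (1 : ℕ) ≠ 2),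
    Pi.single_eq_of_ne (by decide : (3 : ℕ) ≠ 2)] at hcex
  omega
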